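/- For every integer t ≥ 1, the permutation matrix of any parallel t-merge is (t+1)-grid free; that is, it admits no (t+1)-grid minor. -/
import Mathlib


/-- `σ` is a parallel `t`-merge: its domain can be partitioned into intervals `J_1, …, J_r`
of consecutive elements, each invariant under `σ`, such that each `J_j` can be further
partitioned into `t` intervals on each of which `σ` is increasing. -/
def IsParallelTMerge {N : ℕ} (σ : Equiv.Perm (Fin N)) (t : ℕ) : Prop :=
  ∃ (r : ℕ) (c : Fin (r + 1) → ℕ),
    Monotone c ∧ c 0 = 0 ∧ c (Fin.last r) = N ∧
    (∀ (j : Fin r) (x : Fin N), c j.castSucc ≤ (x : ℕ) → (x : ℕ) < c j.succ →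
        c j.castSucc ≤ (σ x : ℕ) ∧ (σ x : ℕ) < c j.succ) ∧
    (∀ j : Fin r, ∃ b : Fin (t + 1) → ℕ,
        Monotone b ∧ b 0 = c j.castSucc ∧ b (Fin.last t) = c j.succ ∧
        ∀ (i : Fin t) (x y : Fin N),
          b i.castSucc ≤ (x : ℕ) → (y : ℕ) < b i.succ → x < y → σ x < σ y)

/-- A `k`-grid minor of a matrix `M` (with `True` marking the nonzero entries): a partition of
the rows into `k` intervals of consecutive rows and of the columns into `k` intervals of
consecutive columns such that every one of the `k²` zones contains a nonzero entry. -/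
def HasGridMinor {m n : ℕ} (M : Fin m → Fin n → Prop) (k : ℕ) : Prop :=
  ∃ (r c : Fin (k + 1) → ℕ),
    Monotone r ∧ r 0 = 0 ∧ r (Fin.last k) = m ∧
    Monotone c ∧ c 0 = 0 ∧ c (Fin.last k) = n ∧
    ∀ i j : Fin k, ∃ (x : Fin m) (y : Fin n),
      r i.castSucc ≤ (x : ℕ) ∧ (x : ℕ) < r i.succ ∧
      c j.castSucc ≤ (y : ℕ) ∧ (y : ℕ) < c j.succ ∧ M x y

lemma exists_interval {m : ℕ} (c : Fin (m + 1) → ℕ) (hc : Monotone c) (x : ℕ)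
    (h0 : c 0 ≤ x) (hl : x < c (Fin.last m)) :
    ∃ j : Fin m, c j.castSucc ≤ x ∧ x < c j.succ := by
  induction m with
  | zero =>
    have : Fin.last 0 = 0 := rfl
    rw [this] at hl
    omega
  | succ n ih =>
    by_cases hx : x < c (Fin.last n).castSucc
    · obtain ⟨j, hj1, hj2⟩ := ih (fun i => c i.castSucc)
        (fun a b hab => hc (Fin.castSucc_le_castSucc_iff.mpr hab))
        (by simpa using h0) hx
      exact ⟨j.castSucc, hj1, by rwa [Fin.succ_castSucc]⟩
    · exact ⟨Fin.last n, le_of_not_gt hx, by rwa [Fin.succ_last]⟩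

/-- the permutation matrix of a parallel `t`-merge is `(t+1)`-grid free. -/
theorem parallel_merge_grid_free (t N : ℕ) (ht : 1 ≤ t) (σ : Equiv.Perm (Fin N))
    (h : IsParallelTMerge σ t) :
    ¬ HasGridMinor (fun i j : Fin N => σ i = j) (t + 1) := by
  rintro ⟨r, c, hrmono, hr0, hrlast, hcmono, hc0, hclast, H⟩
  obtain ⟨r', c', hc'mono, hc'0, hc'last, hinv, hmerge⟩ := h
  choose x y hx1 hx2 hy1 hy2 hxy using fun i : Fin (t + 1) => H i i.rev
  have hy1' : ∀ i, c i.rev.castSucc ≤ (σ (x i) : ℕ) := fun i => by rw [hxy]; exact hy1 i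
  have hy2' : ∀ i, (σ (x i) : ℕ) < c i.rev.succ := fun i => by rw [hxy]; exact hy2 i
  -- the chosen points are strictly increasing in rows
  have hxmono : ∀ i i' : Fin (t + 1), i < i' → (x i : ℕ) < x i' := by
    intro i i' hii
    calc (x i : ℕ) < r i.succ := hx2 i
      _ ≤ r i'.castSucc := hrmono (by
          have h2 : (i : ℕ) < i' := hii
          simp only [Fin.le_def, Fin.val_succ, Fin.coe_castSucc]; omega)
      _ ≤ x i' := hx1 i'
  -- and strictly decreasing in columns
  have hanti : ∀ i i' : Fin (t + 1), i < i' → (σ (x i') : ℕ) < σ (x i) := by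
    intro i i' hii
    calc (σ (x i') : ℕ) < c i'.rev.succ := hy2' i'
      _ ≤ c i.rev.castSucc := hcmono (by
          have h1 : (i' : ℕ) < t + 1 := i'.isLt
          have h2 : (i : ℕ) < i' := hii
          simp only [Fin.le_def, Fin.val_succ, Fin.coe_castSucc, Fin.val_rev]; omega)
      _ ≤ σ (x i) := hy1' i
  -- which big block each point lies in
  have hblk := fun i : Fin (t + 1) =>
    exists_interval c' hc'mono (x i) (by rw [hc'0]; exact Nat.zero_le _)
      (by rw [hc'last]; exact (x i).isLt)
  choose j hj1 hj2 using hblk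
  have hs := fun i : Fin (t + 1) => hinv (j i) (x i) (hj1 i) (hj2 i)
  -- all points lie in the same big block
  have hjle : ∀ i i' : Fin (t + 1), i < i' → (j i : ℕ) ≤ j i' := by
    intro i i' hii
    by_contra hlt
    push_neg at hlt
    have hlt2 : (x i' : ℕ) < x i :=
      calc (x i' : ℕ) < c' (j i').succ := hj2 i'
        _ ≤ c' (j i).castSucc := hc'mono (by
            simp only [Fin.le_def, Fin.val_succ, Fin.coe_castSucc]; omega)
        _ ≤ x i := hj1 i
    have := hxmono i i' hii
    omega
  have hjge : ∀ i i' : Fin (t + 1), i < i' → (j i' : ℕ) ≤ j i := by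
    intro i i' hii
    by_contra hlt
    push_neg at hlt
    have hlt2 : (σ (x i) : ℕ) < σ (x i') :=
      calc (σ (x i) : ℕ) < c' (j i).succ := (hs i).2
        _ ≤ c' (j i').castSucc := hc'mono (by
            simp only [Fin.le_def, Fin.val_succ, Fin.coe_castSucc]; omega)
        _ ≤ σ (x i') := (hs i').1
    have := hanti i i' hii
    omega
  have hjeq : ∀ i i' : Fin (t + 1), j i = j i' := by
    intro i i'
    rcases lt_trichotomy i i' with hlt | heq | hgt
    · exact Fin.ext (le_antisymm (hjle i i' hlt) (hjge i i' hlt))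
    · rw [heq]
    · exact (Fin.ext (le_antisymm (hjle i' i hgt) (hjge i' i hgt))).symm
  obtain ⟨b, hbmono, hb0, hblast, hinc⟩ := hmerge (j 0)
  have hxin : ∀ i : Fin (t + 1), b 0 ≤ (x i : ℕ) ∧ (x i : ℕ) < b (Fin.last t) := by
    intro i
    rw [hb0, hblast, hjeq 0 i]
    exact ⟨hj1 i, hj2 i⟩
  choose k hk1 hk2 using fun i : Fin (t + 1) =>
    exists_interval b hbmono (x i) (hxin i).1 (hxin i).2
  have key : ∀ i i' : Fin (t + 1), i < i' → k i = k i' → False := by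
    intro i i' hii hkk
    have hlt : x i < x i' := Fin.lt_def.mpr (hxmono i i' hii)
    have h1 := hinc (k i) (x i) (x i') (hk1 i) (by rw [hkk]; exact hk2 i') hlt
    have h2 := hanti i i' hii
    have h3 : (σ (x i) : ℕ) < σ (x i') := h1
    omega
  obtain ⟨i, i', hne, hkk⟩ := Fintype.exists_ne_map_eq_of_card_lt k (by simp)
  rcases hne.lt_or_gt with hlt | hlt
  · exact key i i' hlt hkk
  · exact key i' i hlt hkk.symm
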